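/- arXiv:2601.06036 — 2 statements merged into one kernel-verified Lean document; each statement's English description precedes it below -/
import Mathlib

section
/- Let u ∈ ℝ^N with u(D,x) = 1 if x = max D and 0 otherwise. Then the Möbius transform b = Ku satisfies b(D,x) = 1 if D = {0,1,...,x} and b(D,x) = 0 otherwise. -/
/-! When `x ∈ D ⊆ E`, `x` is the maximum of `E` exactly when `E ⊆ {0, …, x}`. Hence `(Ku)(D, x)` is
the alternating sum `∑ (-1)^|E \ D|` over the interval `[D, {0, …, x}]` of the subset lattice,
which is `1` if the interval is the single point `D = {0, …, x}` and `0` otherwise. -/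

open Finset

/-- Möbius operator. -/
noncomputable def Kop (n : ℕ) (ρ : Finset (Fin n) → Fin n → ℝ)
    (D : Finset (Fin n)) (x : Fin n) : ℝ :=
  ∑ E ∈ univ.filter (fun E => D ⊆ E), (-1 : ℝ) ^ (E \ D).card * ρ E x

/-- `u(D,x) = 1` if `x = max D` and `0` otherwise. -/
noncomputable def uVec (n : ℕ) (D : Finset (Fin n)) (x : Fin n) : ℝ :=
  if h : D.Nonempty then (if x = D.max' h then 1 else 0) else 0

namespace Finset

theorem sum_Icc_neg_one_pow_card_sdiff {α R : Type*} [DecidableEq α] [Ring R]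
    (s t : Finset α) : ∑ u ∈ Icc s t, (-1 : R) ^ #(u \ s) = if s = t then 1 else 0 := by
  by_cases hst : s ⊆ t
  · have hsdiff : ∀ v ∈ (t \ s).powerset, (s ∪ v) \ s = v := fun v hv => by
      rw [union_sdiff_left, sdiff_eq_self_of_disjoint
        (disjoint_of_subset_left (mem_powerset.mp hv) sdiff_disjoint)]
    have hpow := congrArg (Int.cast : ℤ → R) (sum_powerset_neg_one_pow_card (x := t \ s))
    push_cast at hpow
    rw [Icc_eq_image_powerset hst, sum_image fun v hv w hw h => by
      rw [← hsdiff v hv, ← hsdiff w hw, show s ∪ v = s ∪ w from h]]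
    rw [sum_congr rfl fun v hv => by rw [hsdiff v hv], hpow]
    exact if_congr (sdiff_eq_empty_iff_subset.trans ⟨hst.antisymm,
      fun h => h ▸ subset_rfl⟩) rfl rfl
  · rw [Icc_eq_empty hst, sum_empty, if_neg fun h => hst h.le]

theorem max'_eq_iff_subset_Iic {α : Type*} [LinearOrder α] [LocallyFiniteOrderBot α]
    {s : Finset α} (H : s.Nonempty) {a : α} (ha : a ∈ s) : s.max' H = a ↔ s ⊆ Iic a := by
  rw [max'_eq_iff]
  simp [ha, subset_iff]

end Finset

theorem uVec_of_mem {n : ℕ} {E : Finset (Fin n)} {x : Fin n} (hx : x ∈ E) :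
    uVec n E x = if E ⊆ Iic x then 1 else 0 := by
  have hE : E.Nonempty := ⟨x, hx⟩
  rw [uVec, dif_pos hE]
  exact if_congr (eq_comm.trans (max'_eq_iff_subset_Iic hE hx)) rfl rfl

/-- The Möbius transform `b = Ku` satisfies `b(D,x) = 1` if `D = {0,1,…,x}`
and `b(D,x) = 0` otherwise. -/
theorem Kop_uVec (n : ℕ) (D : Finset (Fin n)) (x : Fin n) (hx : x ∈ D) :
    Kop n (uVec n) D x = if D = Finset.Iic x then 1 else 0 := by
  calc Kop n (uVec n) D x
      = ∑ E ∈ univ.filter (D ⊆ ·), if E ⊆ Iic x then (-1 : ℝ) ^ #(E \ D) else 0 :=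
        sum_congr rfl fun E hE => by
          rw [uVec_of_mem ((mem_filter.mp hE).2 hx), mul_ite, mul_one, mul_zero]
    _ = ∑ E ∈ Icc D (Iic x), (-1 : ℝ) ^ #(E \ D) := by
        rw [← sum_filter, filter_filter]
        congr 1
        ext E
        simp
    _ = if D = Iic x then 1 else 0 := sum_Icc_neg_one_pow_card_sdiff D (Iic x)
end

section
/- A vector ρ ∈ ℝ^N satisfies the normalization constraint Σ_{x ∈ D} ρ(D,x) = 1 for every nonempty D ⊆ X if and only if κ = Kρ is a flow on the Boolean lattice graph 𝒢 with total flow 1, i.e., for every vertex D ∉ {∅, X}: Σ_{x ∈ D} κ(D,x) = Σ_{y ∉ D} κ(D ∪ {y}, y), and Σ_{x ∈ X} κ(X,x) = 1. -/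
open Finset

/-- Flow conservation on the Boolean lattice graph: for every vertex
`D ∉ {∅, X}`, `∑_{x ∈ D} κ(D,x) = ∑_{y ∉ D} κ(D ∪ {y}, y)`. -/
def IsFlow (n : ℕ) (κ : Finset (Fin n) → Fin n → ℝ) : Prop :=
  ∀ D : Finset (Fin n), D ≠ ∅ → D ≠ univ →
    ∑ x ∈ D, κ D x = ∑ y ∈ Dᶜ, κ (insert y D) y

/-! Write `σ D = ∑ x ∈ D, ρ D x`. The divergence of `κ = Kρ` at `D` is the upper Möbius
transform of `σ` at `D`: each `ρ E y` with `y ∈ E \ D` enters the inflow with the sign opposite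
to the one it has in the outflow. So `κ` is a flow iff the Möbius transform of `σ` vanishes off
`∅` and `X`, and the total flow is `σ X`. By Möbius inversion `σ D = ∑_{E ⊇ D} (Möbius σ) E`,
this means `σ ≡ 1` on nonempty sets; conversely, if `σ ≡ 1` on the supersets of `D ≠ X`, its
transform at `D` is the alternating sum `∑_{E ⊇ D} (-1)^|E \ D| = 0`. -/

namespace Finset

variable {α R : Type*} [DecidableEq α] [CommRing R]

theorem sum_Icc_neg_one_pow_card_sdiff_left (s t : Finset α) :
    ∑ u ∈ Icc s t, (-1 : R) ^ #(u \ s) = if s = t then 1 else 0 := by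
  by_cases hst : s ⊆ t
  · have hdisj : ∀ A ∈ (t \ s).powerset, Disjoint s A := fun A hA =>
      disjoint_of_subset_right (mem_powerset.1 hA) disjoint_sdiff
    have hinj : Set.InjOn (s ∪ ·) (t \ s).powerset := fun A hA B hB hAB => by
      simpa [union_sdiff_cancel_left (hdisj A hA), union_sdiff_cancel_left (hdisj B hB)]
        using congrArg (· \ s) hAB
    rw [Icc_eq_image_powerset hst, sum_image hinj,
      sum_congr rfl fun A hA => by rw [union_sdiff_cancel_left (hdisj A hA)]]
    have := congrArg (Int.cast : ℤ → R) (sum_powerset_neg_one_pow_card (x := t \ s))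
    push_cast at this
    rw [this]
    exact if_congr (sdiff_eq_empty_iff_subset.trans ⟨subset_antisymm hst, fun h => h ▸ subset_rfl⟩)
      rfl rfl
  · rw [Icc_eq_empty (by simpa using hst), sum_empty, if_neg (by rintro rfl; exact hst subset_rfl)]

theorem sum_Icc_neg_one_pow_card_sdiff_right (s t : Finset α) :
    ∑ u ∈ Icc s t, (-1 : R) ^ #(t \ u) = if s = t then 1 else 0 := by
  have hsign : ∀ u ∈ Icc s t, (-1 : R) ^ #(t \ u) = (-1) ^ #(t \ s) * (-1) ^ #(u \ s) := by
    intro u hu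
    obtain ⟨hsu, hut⟩ := mem_Icc.1 hu
    have : #(t \ s) = #(t \ u) + #(u \ s) := by
      have := card_sdiff_add_card_eq_card hsu
      have := card_sdiff_add_card_eq_card hut
      have := card_sdiff_add_card_eq_card (hsu.trans hut)
      omega
    rw [this, pow_add, mul_assoc, ← pow_add, ← two_mul, pow_mul, neg_one_sq, one_pow, mul_one]
  rw [sum_congr rfl hsign, ← mul_sum, sum_Icc_neg_one_pow_card_sdiff_left]
  split_ifs with h <;> simp [h]

theorem neg_one_pow_card_sdiff_insert {s t : Finset α} {y : α} (hy : y ∈ t \ s) :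
    (-1 : R) ^ #(t \ insert y s) = -(-1) ^ #(t \ s) := by
  rw [sdiff_insert, ← card_erase_add_one hy, pow_succ]
  ring

end Finset

section UpperMoebius

variable {α R : Type*} [Fintype α] [DecidableEq α] [CommRing R]

def upperMoebius (g : Finset α → R) (s : Finset α) : R :=
  ∑ t ∈ univ.filter (fun t => s ⊆ t), (-1 : R) ^ #(t \ s) * g t

theorem filter_superset_eq_Icc (s : Finset α) : univ.filter (fun t => s ⊆ t) = Icc s univ := by
  ext t; simp

theorem upperMoebius_univ (g : Finset α → R) : upperMoebius g univ = g univ := by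
  simp [upperMoebius, univ_subset_iff, filter_eq']

theorem upperMoebius_congr {f g : Finset α → R} {s : Finset α}
    (h : ∀ t, s ⊆ t → f t = g t) : upperMoebius f s = upperMoebius g s :=
  sum_congr rfl fun t ht => by rw [h t (mem_filter.1 ht).2]

theorem upperMoebius_const (c : R) (s : Finset α) :
    upperMoebius (fun _ => c) s = if s = univ then c else 0 := by
  rw [upperMoebius, ← sum_mul, filter_superset_eq_Icc, sum_Icc_neg_one_pow_card_sdiff_left]
  split_ifs <;> simp

theorem sum_upperMoebius (g : Finset α → R) (s : Finset α) :
    ∑ t ∈ univ.filter (fun t => s ⊆ t), upperMoebius g t = g s := by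
  calc ∑ t ∈ univ.filter (fun t => s ⊆ t), upperMoebius g t
      = ∑ u ∈ univ.filter (fun u => s ⊆ u), (∑ t ∈ Icc s u, (-1 : R) ^ #(u \ t)) * g u := by
        simp only [upperMoebius, sum_mul]
        refine sum_comm' fun t u => ?_
        simp only [mem_filter, mem_univ, true_and, mem_Icc]
        exact ⟨fun ⟨hst, htu⟩ => ⟨⟨hst, htu⟩, hst.trans htu⟩, fun ⟨h, _⟩ => h⟩
    _ = g s := by
        simp_rw [sum_Icc_neg_one_pow_card_sdiff_right, ite_mul, one_mul, zero_mul]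
        simp

def divergence (κ : Finset α → α → R) (s : Finset α) : R :=
  ∑ x ∈ s, κ s x - ∑ y ∈ sᶜ, κ (insert y s) y

theorem divergence_upperMoebius (ρ : Finset α → α → R) (s : Finset α) :
    divergence (fun t x => upperMoebius (ρ · x) t) s =
      upperMoebius (fun t => ∑ x ∈ t, ρ t x) s := by
  have hdown : ∑ x ∈ s, upperMoebius (ρ · x) s
      = ∑ t ∈ univ.filter (fun t => s ⊆ t), (-1 : R) ^ #(t \ s) * ∑ x ∈ s, ρ t x := by
    simp only [upperMoebius, mul_sum]
    exact sum_comm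
  have hup : ∑ y ∈ sᶜ, upperMoebius (ρ · y) (insert y s)
      = -∑ t ∈ univ.filter (fun t => s ⊆ t), (-1 : R) ^ #(t \ s) * ∑ y ∈ t \ s, ρ t y := by
    calc ∑ y ∈ sᶜ, upperMoebius (ρ · y) (insert y s)
        = ∑ t ∈ univ.filter (fun t => s ⊆ t),
            ∑ y ∈ t \ s, (-1 : R) ^ #(t \ insert y s) * ρ t y := by
          refine sum_comm' fun y t => ?_
          simp only [mem_filter, mem_univ, true_and, mem_compl, mem_sdiff, insert_subset_iff]
          tauto
      _ = _ := by
          simp only [neg_mul_eq_neg_mul, mul_sum, ← sum_neg_distrib]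
          refine sum_congr rfl fun t _ => sum_congr rfl fun y hy => ?_
          rw [neg_one_pow_card_sdiff_insert hy]
  rw [divergence, hdown, hup, sub_neg_eq_add, ← sum_add_distrib, upperMoebius]
  refine sum_congr rfl fun t ht => ?_
  rw [← mul_add, add_comm, sum_sdiff (mem_filter.1 ht).2]

end UpperMoebius

theorem Kop_eq_upperMoebius (n : ℕ) (ρ : Finset (Fin n) → Fin n → ℝ) :
    Kop n ρ = fun D x => upperMoebius (ρ · x) D := rfl

theorem isFlow_iff_divergence_eq_zero (n : ℕ) (κ : Finset (Fin n) → Fin n → ℝ) :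
    IsFlow n κ ↔ ∀ D : Finset (Fin n), D ≠ ∅ → D ≠ univ → divergence κ D = 0 := by
  simp only [IsFlow, divergence, sub_eq_zero]

/-- `ρ` satisfies the normalization constraints `∑_{x ∈ D} ρ(D,x) = 1` for all
nonempty `D` iff `κ = Kρ` is a flow on the Boolean lattice with total flow 1. -/
theorem normalization_iff_flow_one (n : ℕ) (hn : 0 < n)
    (ρ : Finset (Fin n) → Fin n → ℝ) :
    (∀ D : Finset (Fin n), D.Nonempty → ∑ x ∈ D, ρ D x = 1) ↔
      (IsFlow n (Kop n ρ) ∧ ∑ x : Fin n, Kop n ρ univ x = 1) := by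
  set σ : Finset (Fin n) → ℝ := fun D => ∑ x ∈ D, ρ D x with hσ
  have htotal : ∑ x : Fin n, Kop n ρ univ x = σ univ := by
    simp only [Kop_eq_upperMoebius, upperMoebius_univ, hσ]
  rw [isFlow_iff_divergence_eq_zero, htotal, Kop_eq_upperMoebius]
  simp only [divergence_upperMoebius, ← hσ]
  constructor
  · intro hnorm
    refine ⟨fun D hD hDu => ?_, hnorm univ (univ_nonempty_iff.2 ⟨⟨0, hn⟩⟩)⟩
    rw [upperMoebius_congr fun E hDE => hnorm E ((nonempty_iff_ne_empty.2 hD).mono hDE),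
      upperMoebius_const, if_neg hDu]
  · rintro ⟨hflow, htot⟩ D hD
    show σ D = 1
    rw [← sum_upperMoebius σ D, sum_eq_single_of_mem univ (by simp), upperMoebius_univ, htot]
    intro E hE hEu
    exact hflow E (hD.mono (mem_filter.1 hE).2).ne_empty hEu
end
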